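/- For every (ξ,η) ∈ ℂ², the real quadratic form q_{(ξ,η)} on ℂ² ≅ ℝ⁴ has neutral signature (2,2): there exists an ℝ-linear isomorphism L : ℝ⁴ → ℂ² such that q_{(ξ,η)}(L(x)) = x₁² + x₂² − x₃² − x₄² for all x ∈ ℝ⁴. -/

import Mathlib

/-!
The metric is `-c Im(v ū) - b |u|²` with `c = 4 / (1 + |ξ|²)² ≠ 0` and `b` real.
Since `Im(i u ū) = |u|²`, the shear `v = -(w + b i u) / c` turns it into `Im(w ū)`, and
`Im(w ū) = Re u · Im w - Im u · Re w` is a sum of two hyperbolic planes.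
-/

open Complex ComplexConjugate

/-- The neutral Kähler metric on the space `𝕋 ≅ ℂ²` of oriented lines, as a real
quadratic form on the tangent vector `(u,v)` at the point `(ξ,η)`. -/
noncomputable def q (ξ η : ℂ) (u v : ℂ) : ℝ :=
  -4 * (v * conj u).im / (1 + normSq ξ) ^ 2 -
    8 * (ξ * conj η).im * normSq u / (1 + normSq ξ) ^ 3

noncomputable def neutralChart : (Fin 4 → ℝ) ≃ₗ[ℝ] ℂ × ℂ where
  toFun x := (⟨x 0 + x 2, x 1 + x 3⟩, ⟨x 3 - x 1, x 0 - x 2⟩)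
  invFun p := ![(p.1.re + p.2.im) / 2, (p.1.im - p.2.re) / 2,
    (p.1.re - p.2.im) / 2, (p.1.im + p.2.re) / 2]
  map_add' x y := by
    apply Prod.ext <;> apply Complex.ext <;>
      simp only [Pi.add_apply, Prod.fst_add, Prod.snd_add, add_re, add_im] <;> ring
  map_smul' r x := by
    apply Prod.ext <;> apply Complex.ext <;>
      simp only [Pi.smul_apply, smul_eq_mul, RingHom.id_apply, Prod.smul_fst, Prod.smul_snd,
        real_smul, mul_re, mul_im, ofReal_re, ofReal_im] <;> ring
  left_inv x := by
    ext i; fin_cases i <;>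
      simp only [Fin.zero_eta, Fin.mk_one, Fin.reduceFinMk, Matrix.cons_val] <;> ring
  right_inv p := by
    apply Prod.ext <;> apply Complex.ext <;> simp only [Matrix.cons_val] <;> ring

theorem im_neutralChart (x : Fin 4 → ℝ) :
    ((neutralChart x).2 * conj (neutralChart x).1).im =
      x 0 ^ 2 + x 1 ^ 2 - x 2 ^ 2 - x 3 ^ 2 := by
  simp only [neutralChart, LinearEquiv.coe_mk, LinearMap.coe_mk, AddHom.coe_mk, mul_im,
    conj_re, conj_im]
  ring

noncomputable def shearEquiv (b c : ℝ) (hc : c ≠ 0) : (ℂ × ℂ) ≃ₗ[ℝ] ℂ × ℂ where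
  toFun p := (p.1, -(p.2 + b * I * p.1) / c)
  invFun p := (p.1, -(c * p.2 + b * I * p.1))
  map_add' p p' := Prod.ext rfl (by simp only [Prod.fst_add, Prod.snd_add]; ring)
  map_smul' r p := Prod.ext rfl (by
    simp only [Prod.smul_fst, Prod.smul_snd, RingHom.id_apply, real_smul]; ring)
  left_inv p := Prod.ext rfl (by simp only; field_simp [ofReal_ne_zero.mpr hc]; ring)
  right_inv p := Prod.ext rfl (by simp only; field_simp [ofReal_ne_zero.mpr hc]; ring)

theorem neg_mul_im_sub_mul_normSq_shearEquiv (b c : ℝ) (hc : c ≠ 0) (p : ℂ × ℂ) :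
    -c * ((shearEquiv b c hc p).2 * conj (shearEquiv b c hc p).1).im
      - b * normSq (shearEquiv b c hc p).1 = (p.2 * conj p.1).im := by
  simp only [shearEquiv, LinearEquiv.coe_mk, LinearMap.coe_mk, AddHom.coe_mk, normSq_apply,
    mul_im, mul_re, add_re, add_im, neg_re, neg_im, div_ofReal_re, div_ofReal_im,
    ofReal_re, ofReal_im, I_re, I_im, conj_re, conj_im]
  field_simp
  ring

theorem q_eq_neg_mul_im_sub_mul_normSq (ξ η u v : ℂ) :
    q ξ η u v = -(4 / (1 + normSq ξ) ^ 2) * (v * conj u).im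
      - 8 * (ξ * conj η).im / (1 + normSq ξ) ^ 3 * normSq u := by
  unfold q
  ring

/-- at every point `(ξ,η)`, the quadratic form `q_{(ξ,η)}` on
`ℂ² ≅ ℝ⁴` has neutral signature `(2,2)`: there is a real linear isomorphism
`L : ℝ⁴ → ℂ²` with `q(L x) = x₁² + x₂² − x₃² − x₄²`. -/
theorem metric_neutral_signature (ξ η : ℂ) :
    ∃ L : (Fin 4 → ℝ) ≃ₗ[ℝ] ℂ × ℂ,
      ∀ x : Fin 4 → ℝ,
        q ξ η (L x).1 (L x).2 = x 0 ^ 2 + x 1 ^ 2 - x 2 ^ 2 - x 3 ^ 2 := by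
  have hc : 4 / (1 + normSq ξ) ^ 2 ≠ 0 := by
    have := normSq_nonneg ξ
    positivity
  refine ⟨neutralChart.trans (shearEquiv (8 * (ξ * conj η).im / (1 + normSq ξ) ^ 3) _ hc),
    fun x => ?_⟩
  rw [q_eq_neg_mul_im_sub_mul_normSq, LinearEquiv.trans_apply,
    neg_mul_im_sub_mul_normSq_shearEquiv, im_neutralChart]
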